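/- arXiv:0804.4287 — 5 statements merged into one kernel-verified Lean document; each statement's English description precedes it below -/
import Mathlib

section
/- Let G be a finite graph on vertex set {1,...,d} allowing loops, and let e = {i,j} be an edge of G with i ≠ j. Then ρ(e) = e_i + e_j fails to be a vertex of the edge polytope P_G (the convex hull of ρ(f) for all edges f of G) if and only if G has a loop at both i and j. -/
/-- `ρ({i,j}) = e_i + e_j ∈ ℝ^d` (so a loop `{i,i}` maps to `2e_i`). -/
noncomputable def rho {d : ℕ} : Sym2 (Fin d) → (Fin d → ℝ) :=
  Sym2.lift ⟨fun i j t => (if t = i then (1 : ℝ) else 0) + (if t = j then 1 else 0),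
    fun i j => funext fun t => add_comm _ _⟩

lemma rho_apply {d : ℕ} (a b t : Fin d) :
    rho s(a, b) t = (if t = a then (1 : ℝ) else 0) + (if t = b then 1 else 0) := rfl

lemma claimA {d : ℕ} {i j : Fin d} (hij : i ≠ j) (f : Sym2 (Fin d)) :
    rho f i + rho f j ≤ 2 := by
  induction f using Sym2.ind with
  | _ a b =>
    simp only [rho_apply]
    by_cases h1 : i = a <;> by_cases h2 : i = b <;> by_cases h3 : j = a <;> by_cases h4 : j = b <;>
      simp_all <;> norm_num

lemma claimB {d : ℕ} {i j : Fin d} (hij : i ≠ j) (f : Sym2 (Fin d)) (hne : f ≠ s(i, j))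
    (h2 : rho f i + rho f j = 2) : f = s(i, i) ∨ f = s(j, j) := by
  induction f using Sym2.ind with
  | _ a b =>
    simp only [rho_apply] at h2
    by_cases h1 : i = a <;> by_cases h2' : i = b <;> by_cases h3 : j = a <;> by_cases h4 : j = b <;>
      subst_vars <;> simp_all [Sym2.eq_swap]

/-- For an edge `e = {i,j}` with `i ≠ j` of a finite graph `G`
(with edge set `E ⊆ Sym2 (Fin d)`, loops allowed), the point `ρ(e)` fails to be a
vertex of the edge polytope `P_G` — i.e. it lies in the convex hull of the points
`ρ(f)`, `f ∈ E`, `f ≠ e` — if and only if `G` has a loop at both `i` and `j`. -/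
theorem stmt0 (d : ℕ) (E : Set (Sym2 (Fin d))) (i j : Fin d) (hij : i ≠ j)
    (he : s(i, j) ∈ E) :
    rho s(i, j) ∈ convexHull ℝ (rho '' (E \ {s(i, j)})) ↔
      s(i, i) ∈ E ∧ s(j, j) ∈ E := by
  constructor
  · intro h
    rw [mem_convexHull_iff_exists_fintype] at h
    obtain ⟨ι, _, w, z, hw0, hw1, hz, hx⟩ := h
    choose f hf hrf using hz
    -- coordinate sums
    have hco : ∀ t : Fin d, ∑ k, w k * z k t = rho s(i, j) t := by
      intro t
      have := congrFun hx t
      simpa [Finset.sum_apply] using this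
    have hxi : ∑ k, w k * z k i = 1 := by
      have := hco i; rwa [rho_apply, if_pos rfl, if_neg hij, add_zero] at this
    have hxj : ∑ k, w k * z k j = 1 := by
      have := hco j; rwa [rho_apply, if_neg (Ne.symm hij), if_pos rfl, zero_add] at this
    have hsum2 : ∑ k, w k * (z k i + z k j) = ∑ k, w k * 2 := by
      simp only [mul_add, Finset.sum_add_distrib, hxi, hxj, ← Finset.sum_mul, hw1]
      norm_num
    have hle : ∀ k ∈ Finset.univ (α := ι), w k * (z k i + z k j) ≤ w k * 2 := by
      intro k _
      have := claimA hij (f k)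
      rw [hrf k] at this
      exact mul_le_mul_of_nonneg_left this (hw0 k)
    have hall := (Finset.sum_eq_sum_iff_of_le hle).mp hsum2
    have hkey : ∀ k, w k ≠ 0 → f k = s(i, i) ∨ f k = s(j, j) := by
      intro k hk
      have h2 : z k i + z k j = 2 := by
        have := hall k (Finset.mem_univ k)
        exact mul_left_cancel₀ hk this
      have hfk2 : rho (f k) i + rho (f k) j = 2 := by rw [hrf k]; exact h2
      exact claimB hij (f k) (hf k).2 hfk2
    constructor
    · -- need s(i,i) ∈ E : look at coordinate j
      by_contra hii
      have hz2 : ∀ k, w k * z k j = w k * 2 := by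
        intro k
        rcases eq_or_ne (w k) 0 with h0 | h0
        · simp [h0]
        · rcases hkey k h0 with hfk | hfk
          · exact absurd (hfk ▸ (hf k).1) hii
          · have : z k j = 2 := by
              rw [← hrf k, hfk, rho_apply]; simp; norm_num
            rw [this]
      have : (1 : ℝ) = 2 := by
        rw [← hxj, Finset.sum_congr rfl fun k _ => hz2 k, ← Finset.sum_mul, hw1, one_mul]
      norm_num at this
    · by_contra hjj
      have hz2 : ∀ k, w k * z k i = w k * 2 := by
        intro k
        rcases eq_or_ne (w k) 0 with h0 | h0
        · simp [h0]
        · rcases hkey k h0 with hfk | hfk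
          · have : z k i = 2 := by
              rw [← hrf k, hfk, rho_apply]; simp; norm_num
            rw [this]
          · exact absurd (hfk ▸ (hf k).1) hjj
      have : (1 : ℝ) = 2 := by
        rw [← hxi, Finset.sum_congr rfl fun k _ => hz2 k, ← Finset.sum_mul, hw1, one_mul]
      norm_num at this
  · rintro ⟨hii, hjj⟩
    have key : rho s(i, j) = (1 / 2 : ℝ) • rho s(i, i) + (1 / 2 : ℝ) • rho s(j, j) := by
      funext t
      simp only [Pi.add_apply, Pi.smul_apply, rho_apply, smul_eq_mul]
      by_cases h1 : t = i <;> by_cases h2 : t = j <;> simp [h1, h2, hij] <;> ring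
    have hmi : rho s(i, i) ∈ rho '' (E \ {s(i, j)}) :=
      ⟨s(i, i), ⟨hii, by simp [Sym2.mk_eq_mk_iff, hij]⟩, rfl⟩
    have hmj : rho s(j, j) ∈ rho '' (E \ {s(i, j)}) :=
      ⟨s(j, j), ⟨hjj, by simp [Sym2.mk_eq_mk_iff, hij, Ne.symm hij]⟩, rfl⟩
    rw [key]
    exact (convex_convexHull ℝ _) (subset_convexHull ℝ _ hmi) (subset_convexHull ℝ _ hmj)
      (by norm_num) (by norm_num) (by norm_num)
end

section
/- Let G be a finite graph containing pairwise distinct vertices i, j, k, ℓ and edges e = {i,j}, f = {k,ℓ}, together with a loop {i,i} and edges {j,k}, {j,ℓ}. Then 2ρ(e) + ρ(f) = ρ({i,i}) + ρ({j,k}) + ρ({j,ℓ}), and hence the convex hull of {ρ(e), ρ(f)} is not an edge of the edge polytope P_G. -/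
/-- `F` is a face of `P` cut out by a supporting hyperplane. -/
def IsFaceOf {d : ℕ} (P F : Set (Fin d → ℝ)) : Prop :=
  ∃ (c : Fin d → ℝ) (b : ℝ), (∀ x ∈ P, ∑ t, c t * x t ≤ b) ∧
    F = {x ∈ P | ∑ t, c t * x t = b}

/-- If a finite graph `G` contains pairwise distinct vertices
`i, j, k, ℓ` and the edges `e = {i,j}`, `f = {k,ℓ}`, together with a loop `{i,i}`
and the edges `{j,k}`, `{j,ℓ}`, then
`2ρ(e) + ρ(f) = ρ({i,i}) + ρ({j,k}) + ρ({j,ℓ})`, and hence the convex hull of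
`{ρ(e), ρ(f)}` is not an edge (1-dimensional face) of the edge polytope `P_G`. -/
theorem stmt4 (d : ℕ) (E : Set (Sym2 (Fin d))) (i j k l : Fin d)
    (hij : i ≠ j) (hik : i ≠ k) (hil : i ≠ l) (hjk : j ≠ k) (hjl : j ≠ l)
    (hkl : k ≠ l)
    (he : s(i, j) ∈ E) (hf : s(k, l) ∈ E) (hloop : s(i, i) ∈ E)
    (hjk' : s(j, k) ∈ E) (hjl' : s(j, l) ∈ E) :
    (2 : ℝ) • rho s(i, j) + rho s(k, l) =
        rho s(i, i) + rho s(j, k) + rho s(j, l) ∧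
      ¬ IsFaceOf (convexHull ℝ (rho '' E))
        (segment ℝ (rho s(i, j)) (rho s(k, l))) := by
  have heq : (2 : ℝ) • rho s(i, j) + rho s(k, l) =
      rho s(i, i) + rho s(j, k) + rho s(j, l) := by
    funext t
    simp only [Pi.add_apply, Pi.smul_apply, rho_apply, smul_eq_mul]
    split_ifs <;> simp_all <;> ring
  refine ⟨heq, ?_⟩
  rintro ⟨c, b, hle, hF⟩
  set L : (Fin d → ℝ) → ℝ := fun x => ∑ t, c t * x t with hL
  have memP : ∀ g ∈ E, rho g ∈ convexHull ℝ (rho '' E) := fun g hg =>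
    subset_convexHull ℝ _ ⟨g, hg, rfl⟩
  have hLe : L (rho s(i, j)) = b := by
    have : rho s(i, j) ∈ segment ℝ (rho s(i, j)) (rho s(k, l)) := left_mem_segment ℝ _ _
    rw [hF] at this; exact this.2
  have hLf : L (rho s(k, l)) = b := by
    have : rho s(k, l) ∈ segment ℝ (rho s(i, j)) (rho s(k, l)) := right_mem_segment ℝ _ _
    rw [hF] at this; exact this.2
  have h1 : L (rho s(i, i)) ≤ b := hle _ (memP _ hloop)
  have h2 : L (rho s(j, k)) ≤ b := hle _ (memP _ hjk')
  have h3 : L (rho s(j, l)) ≤ b := hle _ (memP _ hjl')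
  have hsum : L (rho s(i, i)) + L (rho s(j, k)) + L (rho s(j, l)) = 3 * b := by
    have key : L (rho s(i, i) + rho s(j, k) + rho s(j, l)) =
        L (rho s(i, i)) + L (rho s(j, k)) + L (rho s(j, l)) := by
      simp only [hL, Pi.add_apply, mul_add, Finset.sum_add_distrib]
    rw [← key, ← heq]
    simp only [hL] at hLe hLf ⊢
    simp only [Pi.add_apply, Pi.smul_apply, smul_eq_mul, mul_add, Finset.sum_add_distrib]
    have h2' : ∑ t, c t * (2 * rho s(i, j) t) = 2 * ∑ t, c t * rho s(i, j) t := by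
      rw [Finset.mul_sum]; exact Finset.sum_congr rfl fun t _ => by ring
    rw [h2', hLe, hLf]; ring
  have hLii : L (rho s(i, i)) = b := by linarith
  have hmem : rho s(i, i) ∈ segment ℝ (rho s(i, j)) (rho s(k, l)) := by
    rw [hF]; exact ⟨memP _ hloop, hLii⟩
  obtain ⟨a, b', ha, hb', hab, hx⟩ := hmem
  have hi := congrFun hx i
  simp only [Pi.add_apply, Pi.smul_apply, rho_apply, smul_eq_mul] at hi
  simp only [if_true, if_neg hij, if_neg hik, if_neg hil] at hi
  -- hi : a * (1 + 0) + b' * (0 + 0) = 1 + 1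
  nlinarith [hi, hab, hb', ha]
end

section
/- Let G be the complete bipartite graph on vertex set V_1 ∪ V_2 ⊆ {1,...,d} with |V_1| = p ≥ 1 and |V_2| = q ≥ 1, V_1 ∩ V_2 = ∅, d = p + q. Then the number of lattice points in the m-th dilate of the edge polytope P_G equals C(p+m−1, p−1) · C(q+m−1, q−1) for every positive integer m. -/
/-!
Since `V₂ = V₁ᶜ`, the edge polytope is the product of simplices
`{y ≥ 0 | ∑_{V₁} y = 1, ∑_{V₂} y = 1}`: every such `y` is the convex combination
`∑_{i ∈ V₁, j ∈ V₂} y_i y_j (e_i + e_j)` of the vertices `ρ(ij)`. Its `m`-th dilate therefore has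
as lattice points the pairs of weak compositions of `m` into `p` and into `q` parts, which stars
and bars counts.
-/

open Pointwise

open Finset

lemma rho_mk {d : ℕ} (i j : Fin d) : rho s(i, j) = Pi.single i 1 + Pi.single j 1 := by
  funext t
  simp [rho, Pi.single_apply]

section SimplexProd

variable {ι : Type*} [Fintype ι] [DecidableEq ι]

def simplexProd (s : Finset ι) : Set (ι → ℝ) :=
  {y | 0 ≤ y ∧ ∑ t ∈ s, y t = 1 ∧ ∑ t ∈ sᶜ, y t = 1}

lemma convex_simplexProd (s : Finset ι) : Convex ℝ (simplexProd s) := by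
  rintro y ⟨hy0, hy1, hy2⟩ z ⟨hz0, hz1, hz2⟩ a b ha hb hab
  refine ⟨add_nonneg (smul_nonneg ha hy0) (smul_nonneg hb hz0), ?_, ?_⟩ <;>
    simp [sum_add_distrib, ← mul_sum, hy1, hy2, hz1, hz2, hab]

lemma single_add_single_mem_simplexProd {s : Finset ι} {i j : ι} (hi : i ∈ s) (hj : j ∉ s) :
    Pi.single i 1 + Pi.single j 1 ∈ simplexProd s := by
  refine ⟨add_nonneg (Pi.single_nonneg.mpr zero_le_one) (Pi.single_nonneg.mpr zero_le_one),
    ?_, ?_⟩ <;>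
    simp [sum_add_distrib, sum_pi_single', hi, hj]

lemma sum_mul_smul_single_add_single {s : Finset ι} {y : ι → ℝ} (hs : ∑ t ∈ s, y t = 1)
    (hsc : ∑ t ∈ sᶜ, y t = 1) :
    ∑ ij ∈ s ×ˢ sᶜ, (y ij.1 * y ij.2) • (Pi.single ij.1 1 + Pi.single ij.2 1 : ι → ℝ) = y := by
  have hsingle : ∀ t, y t • (Pi.single t 1 : ι → ℝ) = Pi.single t (y t) := fun t => by
    rw [← Pi.single_smul, smul_eq_mul, mul_one]
  calc _ = ∑ i ∈ s, (y i * ∑ j ∈ sᶜ, y j) • (Pi.single i 1 : ι → ℝ) +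
        ∑ i ∈ s, y i • ∑ j ∈ sᶜ, y j • (Pi.single j 1 : ι → ℝ) := by
        simp only [sum_product, smul_add, sum_add_distrib, mul_sum, sum_smul, smul_sum, mul_smul]
    _ = ∑ t, Pi.single t (y t) := by
        rw [← sum_smul, hs, hsc, one_smul, ← sum_add_sum_compl s]
        simp only [mul_one, hsingle]
    _ = y := univ_sum_single y

lemma mem_smul_simplexProd {s : Finset ι} {m : ℝ} (hm : 0 < m) {x : ι → ℝ} :
    x ∈ m • simplexProd s ↔ 0 ≤ x ∧ ∑ t ∈ s, x t = m ∧ ∑ t ∈ sᶜ, x t = m := by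
  rw [Set.mem_smul_set_iff_inv_smul_mem₀ hm.ne']
  simp only [simplexProd, Set.mem_ofPred_eq, Pi.smul_apply, smul_eq_mul, ← mul_sum,
    inv_mul_eq_one₀ hm.ne', smul_nonneg_iff_nonneg_of_pos_left (inv_pos.mpr hm), eq_comm]

end SimplexProd

theorem convexHull_rho_eq_simplexProd {d : ℕ} (s : Finset (Fin d)) :
    convexHull ℝ (rho '' {e : Sym2 (Fin d) | ∃ i ∈ s, ∃ j ∈ sᶜ, e = s(i, j)}) =
      simplexProd s := by
  apply subset_antisymm
  · refine convexHull_min ?_ (convex_simplexProd s)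
    rintro _ ⟨_, ⟨i, hi, j, hj, rfl⟩, rfl⟩
    rw [rho_mk]
    exact single_add_single_mem_simplexProd hi (mem_compl.mp hj)
  · rintro y ⟨hy0, hs, hsc⟩
    rw [← sum_mul_smul_single_add_single hs hsc]
    refine (convex_convexHull ℝ _).sum_mem (fun ij _ => mul_nonneg (hy0 _) (hy0 _)) ?_ ?_
    · rw [sum_product]
      simp only [← mul_sum, hsc, mul_one, hs]
    · rintro ⟨i, j⟩ hij
      rw [mem_product] at hij
      exact subset_convexHull ℝ _ ⟨s(i, j), ⟨i, hij.1, j, hij.2, rfl⟩, rho_mk i j⟩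

lemma exists_eq_natCast_comp_of_nonneg {ι : Type*} {x : ι → ℝ} (hx : 0 ≤ x)
    (hint : ∀ t, ∃ z : ℤ, x t = z) : ∃ a : ι → ℕ, x = ((↑) : ℕ → ℝ) ∘ a := by
  have : ∀ t, ∃ n : ℕ, x t = n := fun t => by
    obtain ⟨z, hz⟩ := hint t
    have hz0 : (0 : ℝ) ≤ z := hz ▸ hx t
    obtain ⟨n, rfl⟩ := Int.eq_ofNat_of_zero_le (Int.cast_nonneg_iff.mp hz0)
    exact ⟨n, hz⟩
  choose a ha using this
  exact ⟨a, funext ha⟩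

section Counting

variable {ι : Type*} [Fintype ι] [DecidableEq ι]

theorem lattice_points_smul_simplexProd_eq_image (s : Finset ι) {m : ℕ} (hm : 0 < m) :
    {x : ι → ℝ | x ∈ (m : ℝ) • simplexProd s ∧ ∀ t, ∃ z : ℤ, x t = z} =
      (fun a : ι → ℕ => ((↑) : ℕ → ℝ) ∘ a) ''
        {a : ι → ℕ | ∑ t ∈ s, a t = m ∧ ∑ t ∈ sᶜ, a t = m} := by
  ext x
  simp only [Set.mem_ofPred_eq, mem_smul_simplexProd (Nat.cast_pos.mpr hm), Set.mem_image]
  constructor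
  · rintro ⟨⟨hx0, hs, hsc⟩, hint⟩
    obtain ⟨a, rfl⟩ := exists_eq_natCast_comp_of_nonneg hx0 hint
    simp only [Function.comp_apply] at hs hsc
    exact ⟨a, ⟨by exact_mod_cast hs, by exact_mod_cast hsc⟩, rfl⟩
  · rintro ⟨a, ⟨hs, hsc⟩, rfl⟩
    refine ⟨⟨fun t => Nat.cast_nonneg _, ?_, ?_⟩, fun t => ⟨a t, rfl⟩⟩ <;>
      simp only [Function.comp_apply, ← Nat.cast_sum, hs, hsc]

lemma Nat.card_fun_sum_eq (α : Type*) [Fintype α] [DecidableEq α] (m : ℕ) :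
    Nat.card {f : α → ℕ // ∑ i, f i = m} = (Fintype.card α + m - 1).choose m := by
  rw [← Nat.card_congr (Sym.equivNatSumOfFintype α m), Nat.card_eq_fintype_card,
    Sym.card_sym_eq_choose]

lemma Nat.card_sum_eq_and_sum_compl_eq (s : Finset ι) (m : ℕ) :
    Nat.card {a : ι → ℕ | ∑ t ∈ s, a t = m ∧ ∑ t ∈ sᶜ, a t = m} =
      (#s + m - 1).choose m * (#sᶜ + m - 1).choose m := by
  have e : {a : ι → ℕ | ∑ t ∈ s, a t = m ∧ ∑ t ∈ sᶜ, a t = m} ≃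
      {f : s → ℕ // ∑ i, f i = m} × {g : {t // t ∉ s} → ℕ // ∑ i, g i = m} :=
    ((Equiv.piEquivPiSubtypeProd (· ∈ s) fun _ => ℕ).subtypeEquiv fun a => by
      simp [Equiv.piEquivPiSubtypeProd, sum_subtype sᶜ (p := (· ∉ s)) (fun t => mem_compl),
        ← sum_coe_sort s]).trans Equiv.subtypeProdEquivProd
  rw [Nat.card_congr e, Nat.card_prod, Nat.card_fun_sum_eq, Nat.card_fun_sum_eq,
    Fintype.card_coe, Fintype.card_subtype_compl, Fintype.card_coe, card_compl]

end Counting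

/-- Let `G` be the complete bipartite graph on `V₁ ∪ V₂` with
`|V₁| = p ≥ 1`, `|V₂| = q ≥ 1`, `V₁ ∩ V₂ = ∅`, `d = p + q`.  Then for every
positive integer `m`, the number of lattice points of the `m`-th dilate of the
edge polytope `P_G` equals `C(p+m−1, p−1) · C(q+m−1, q−1)`. -/
theorem stmt6 (p q m : ℕ) (hp : 1 ≤ p) (hq : 1 ≤ q) (hm : 0 < m)
    (V1 V2 : Finset (Fin (p + q))) (hdisj : Disjoint V1 V2)
    (hV1 : V1.card = p) (hV2 : V2.card = q) :
    Set.ncard {x : Fin (p + q) → ℝ |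
        x ∈ (m : ℝ) •
          convexHull ℝ (rho '' {e : Sym2 (Fin (p + q)) | ∃ i ∈ V1, ∃ j ∈ V2, e = s(i, j)}) ∧
        ∀ t, ∃ z : ℤ, x t = (z : ℝ)} =
      Nat.choose (p + m - 1) (p - 1) * Nat.choose (q + m - 1) (q - 1) := by
  obtain rfl : V2 = V1ᶜ := eq_of_subset_of_card_le (subset_compl_iff_disjoint_left.mpr hdisj)
    (by rw [card_compl, Fintype.card_fin, hV1, hV2, Nat.add_sub_cancel_left])
  rw [convexHull_rho_eq_simplexProd, lattice_points_smul_simplexProd_eq_image V1 hm,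
    Set.ncard_image_of_injective _ Nat.cast_injective.comp_left, ← Nat.card_coe_set_eq,
    Nat.card_sum_eq_and_sum_compl_eq, hV1, hV2]
  congr 1 <;> exact Nat.choose_symm_of_eq_add (by omega)
end

section
/- Let G be a connected finite graph on vertex set V (without loops). Then the dimension of the edge polytope P_G equals |V| − 2 if G is bipartite (has no odd cycle), and |V| − 1 otherwise. -/
lemma rho_eq {d : ℕ} (i j : Fin d) : rho s(i,j) = Pi.single i 1 + Pi.single j 1 := by
  funext t
  simp [rho, Pi.single_apply]

-- sum functional
noncomputable def sumF (d : ℕ) : (Fin d → ℝ) →ₗ[ℝ] ℝ := ∑ v, LinearMap.proj v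

lemma sumF_apply {d : ℕ} (x : Fin d → ℝ) : sumF d x = ∑ v, x v := by
  simp [sumF]

lemma sumF_rho {d : ℕ} (i j : Fin d) : sumF d (rho s(i,j)) = 2 := by
  rw [rho_eq, map_add]
  have h : ∀ k : Fin d, sumF d (Pi.single k 1) = 1 := by
    intro k
    rw [sumF_apply]
    simp [Pi.single_apply]
  rw [h, h]; norm_num

lemma span_eq_vectorSpan_add {d : ℕ} (S : Set (Fin d → ℝ)) (hS : ∀ x ∈ S, sumF d x = 2)
    (hne : S.Nonempty) :
    Module.finrank ℝ (Submodule.span ℝ S) = Module.finrank ℝ (vectorSpan ℝ S) + 1 := by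
  obtain ⟨p, hp⟩ := hne
  have hp0 : p ≠ 0 := by
    intro h
    have := hS p hp
    rw [h, map_zero] at this
    norm_num at this
  have hVle : vectorSpan ℝ S ≤ LinearMap.ker (sumF d) := by
    rw [vectorSpan_def]
    refine Submodule.span_le.2 ?_
    rintro z ⟨x, hx, y, hy, rfl⟩
    simp only [SetLike.mem_coe, LinearMap.mem_ker, vsub_eq_sub, map_sub, hS x hx, hS y hy, sub_self]
  have hsup : Submodule.span ℝ S = vectorSpan ℝ S ⊔ Submodule.span ℝ {p} := by
    apply le_antisymm
    · refine Submodule.span_le.2 ?_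
      intro s hs
      have : s = (s - p) + p := by ring
      rw [this]
      refine Submodule.add_mem_sup ?_ (Submodule.mem_span_singleton_self p)
      rw [vectorSpan_def]
      exact Submodule.subset_span ⟨s, hs, p, hp, rfl⟩
    · refine sup_le ?_ ?_
      · rw [vectorSpan_def]
        refine Submodule.span_le.2 ?_
        rintro z ⟨x, hx, y, hy, rfl⟩
        exact Submodule.sub_mem _ (Submodule.subset_span hx) (Submodule.subset_span hy)
      · exact Submodule.span_mono (Set.singleton_subset_iff.2 hp)
  have hinf : vectorSpan ℝ S ⊓ Submodule.span ℝ {p} = ⊥ := by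
    rw [eq_bot_iff]
    rintro z ⟨hz1, hz2⟩
    obtain ⟨c, rfl⟩ := Submodule.mem_span_singleton.1 hz2
    have : sumF d (c • p) = 0 := hVle hz1
    rw [map_smul, hS p hp, smul_eq_mul] at this
    have hc : c = 0 := by linarith
    simp [hc]
  have := Submodule.finrank_sup_add_finrank_inf_eq (vectorSpan ℝ S) (Submodule.span ℝ {p})
  rw [hinf, finrank_span_singleton hp0] at this
  rw [hsup]
  simpa using this

lemma walk_mem {d : ℕ} {G : SimpleGraph (Fin d)} {u v : Fin d} (p : G.Walk u v) :
    (Even p.length →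
      Pi.single u 1 - Pi.single v 1 ∈
        Submodule.span ℝ {x : Fin d → ℝ | ∃ i j, G.Adj i j ∧ x = rho s(i, j)}) ∧
    (Odd p.length →
      Pi.single u 1 + Pi.single v 1 ∈
        Submodule.span ℝ {x : Fin d → ℝ | ∃ i j, G.Adj i j ∧ x = rho s(i, j)}) := by
  set M := Submodule.span ℝ {x : Fin d → ℝ | ∃ i j, G.Adj i j ∧ x = rho s(i, j)} with hM
  induction p with
  | nil =>
    constructor
    · intro _; simp
    · intro h; simp at h
  | @cons a b c h p ih =>
    have hedge : Pi.single a 1 + Pi.single b 1 ∈ M := by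
      rw [← rho_eq]
      exact Submodule.subset_span ⟨a, b, h, rfl⟩
    constructor
    · intro he
      rw [SimpleGraph.Walk.length_cons, Nat.even_add_one] at he
      have hodd : Odd p.length := Nat.not_even_iff_odd.1 he
      have := ih.2 hodd
      have heq : (Pi.single a 1 : Fin d → ℝ) - Pi.single c 1 =
          (Pi.single a 1 + Pi.single b 1) - (Pi.single b 1 + Pi.single c 1) := by ring
      rw [heq]
      exact Submodule.sub_mem _ hedge this
    · intro ho
      rw [SimpleGraph.Walk.length_cons, Nat.odd_add_one] at ho
      have := ih.1 (Nat.not_odd_iff_even.1 ho)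
      have heq : (Pi.single a 1 : Fin d → ℝ) + Pi.single c 1 =
          (Pi.single a 1 + Pi.single b 1) - (Pi.single b 1 - Pi.single c 1) := by ring
      rw [heq]
      exact Submodule.sub_mem _ hedge this

open Classical in
lemma exists_odd_closed_walk {d : ℕ} {G : SimpleGraph (Fin d)} (hG : G.Connected)
    (hn : ¬ G.Colorable 2) : ∃ (x : Fin d) (w : G.Walk x x), Odd w.length := by
  by_contra h
  push_neg at h
  have hd : Nonempty (Fin d) := hG.nonempty
  obtain ⟨r⟩ := hd
  have hw : ∀ v : Fin d, Nonempty (G.Walk r v) := fun v => (hG.preconnected r v)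
  let pv : ∀ v : Fin d, G.Walk r v := fun v => (hw v).some
  let c : Fin d → Fin 2 := fun v => if Even (pv v).length then 0 else 1
  have hvalid : ∀ {u v : Fin d}, G.Adj u v → c u ≠ c v := by
    intro u v huv
    have hclosed : Even (((pv u).append (SimpleGraph.Walk.cons huv (pv v).reverse)).length) := by
      have := h r ((pv u).append (SimpleGraph.Walk.cons huv (pv v).reverse))
      exact Nat.not_odd_iff_even.1 this
    rw [SimpleGraph.Walk.length_append, SimpleGraph.Walk.length_cons,
      SimpleGraph.Walk.length_reverse, Nat.even_iff] at hclosed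
    simp only [c]
    rcases Nat.even_or_odd (pv u).length with h1 | h1 <;>
      rcases Nat.even_or_odd (pv v).length with h2 | h2
    · exfalso; rw [Nat.even_iff] at h1 h2; omega
    · simp [if_pos h1, if_neg (Nat.not_even_iff_odd.2 h2)]
    · simp [if_neg (Nat.not_even_iff_odd.2 h1), if_pos h2]
    · exfalso; rw [Nat.odd_iff] at h1 h2; omega
  have : G.Colorable 2 := by
    have := SimpleGraph.Coloring.colorable (⟨c, hvalid⟩ : G.Coloring (Fin 2))
    simpa using this
  exact hn this

lemma span_top_of_not_colorable {d : ℕ} {G : SimpleGraph (Fin d)} (hG : G.Connected)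
    (hn : ¬ G.Colorable 2) :
    Submodule.span ℝ {x : Fin d → ℝ | ∃ i j, G.Adj i j ∧ x = rho s(i, j)} = ⊤ := by
  set M := Submodule.span ℝ {x : Fin d → ℝ | ∃ i j, G.Adj i j ∧ x = rho s(i, j)} with hM
  obtain ⟨x, w, hodd⟩ := exists_odd_closed_walk hG hn
  have hx : (Pi.single x 1 : Fin d → ℝ) ∈ M := by
    have h2 : (Pi.single x 1 : Fin d → ℝ) + Pi.single x 1 ∈ M := (walk_mem w).2 hodd
    have : (Pi.single x 1 : Fin d → ℝ) = (1/2 : ℝ) • (Pi.single x 1 + Pi.single x 1) := by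
      module
    rw [this]
    exact Submodule.smul_mem _ _ h2
  have hall : ∀ v : Fin d, (Pi.single v 1 : Fin d → ℝ) ∈ M := by
    intro v
    obtain ⟨p⟩ := hG.preconnected x v
    rcases Nat.even_or_odd p.length with he | ho
    · have := (walk_mem p).1 he
      have heq : (Pi.single v 1 : Fin d → ℝ) =
          Pi.single x 1 - (Pi.single x 1 - Pi.single v 1) := by ring
      rw [heq]; exact Submodule.sub_mem _ hx this
    · have := (walk_mem p).2 ho
      have heq : (Pi.single v 1 : Fin d → ℝ) =
          (Pi.single x 1 + Pi.single v 1) - Pi.single x 1 := by ring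
      rw [heq]; exact Submodule.sub_mem _ this hx
  rw [eq_top_iff]
  intro y _
  have hy : y = ∑ i, y i • (Pi.single i 1 : Fin d → ℝ) := by
    funext j
    rw [Finset.sum_apply]
    simp [Pi.single_apply]
  rw [hy]
  exact Submodule.sum_mem _ fun i _ => Submodule.smul_mem _ _ (hall i)

lemma fin2_sign_sum {a b : Fin 2} (h : a ≠ b) :
    ((if a = 0 then (1:ℝ) else -1) + (if b = 0 then 1 else -1)) = 0 := by
  fin_cases a <;> fin_cases b <;> simp_all <;> norm_num

lemma finrank_span_le_of_colorable {d : ℕ} {G : SimpleGraph (Fin d)} (hd : 0 < d)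
    (hC : G.Colorable 2) :
    Module.finrank ℝ (Submodule.span ℝ {x : Fin d → ℝ | ∃ i j, G.Adj i j ∧ x = rho s(i, j)})
      ≤ d - 1 := by
  obtain ⟨C⟩ := hC
  let ε : Fin d → ℝ := fun v => if C v = 0 then 1 else -1
  let f : (Fin d → ℝ) →ₗ[ℝ] ℝ := ∑ v, ε v • LinearMap.proj v
  have hf_apply : ∀ x, f x = ∑ v, ε v * x v := by
    intro x
    simp [f, LinearMap.sum_apply]
  have hf_single : ∀ k : Fin d, f (Pi.single k 1) = ε k := by
    intro k
    rw [hf_apply]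
    simp [Pi.single_apply]
  have hle : Submodule.span ℝ {x : Fin d → ℝ | ∃ i j, G.Adj i j ∧ x = rho s(i, j)}
      ≤ LinearMap.ker f := by
    refine Submodule.span_le.2 ?_
    rintro x ⟨i, j, hij, rfl⟩
    rw [SetLike.mem_coe, LinearMap.mem_ker, rho_eq, map_add, hf_single, hf_single]
    exact fin2_sign_sum (C.valid hij)
  have hfne : f ≠ 0 := by
    intro h0
    have := hf_single ⟨0, hd⟩
    rw [h0] at this
    simp only [LinearMap.zero_apply] at this
    by_cases hc : C ⟨0, hd⟩ = 0 <;> simp [ε, hc] at this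
  have hsurj : Function.Surjective f := by
    obtain ⟨x, hx⟩ : ∃ x, f x ≠ 0 := by
      by_contra hx
      push_neg at hx
      exact hfne (LinearMap.ext fun x => by rw [hx x, LinearMap.zero_apply])
    intro c
    exact ⟨(c / f x) • x, by rw [map_smul, smul_eq_mul, div_mul_cancel₀ _ hx]⟩
  have hker : Module.finrank ℝ (LinearMap.ker f) = d - 1 := by
    have h1 := LinearMap.finrank_range_add_finrank_ker f
    rw [LinearMap.range_eq_top.2 hsurj, finrank_top, Module.finrank_self,
      Module.finrank_pi, Fintype.card_fin] at h1
    omega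
  calc Module.finrank ℝ (Submodule.span ℝ {x : Fin d → ℝ | ∃ i j, G.Adj i j ∧ x = rho s(i, j)})
      ≤ Module.finrank ℝ (LinearMap.ker f) := Submodule.finrank_mono hle
    _ = d - 1 := hker

lemma finrank_span_ge {d : ℕ} {G : SimpleGraph (Fin d)} (hG : G.Connected) (r : Fin d) :
    d - 1 ≤
      Module.finrank ℝ (Submodule.span ℝ {x : Fin d → ℝ | ∃ i j, G.Adj i j ∧ x = rho s(i, j)}) := by
  set M := Submodule.span ℝ {x : Fin d → ℝ | ∃ i j, G.Adj i j ∧ x = rho s(i, j)} with hM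
  have hε : ∀ v : Fin d, ∃ e : ℝ, (e = 1 ∨ e = -1) ∧
      (Pi.single r 1 : Fin d → ℝ) + e • (Pi.single v 1 : Fin d → ℝ) ∈ M := by
    intro v
    obtain ⟨p⟩ := hG.preconnected r v
    rcases Nat.even_or_odd p.length with he | ho
    · refine ⟨-1, Or.inr rfl, ?_⟩
      have := (walk_mem p).1 he
      have heq : (Pi.single r 1 : Fin d → ℝ) + (-1 : ℝ) • (Pi.single v 1 : Fin d → ℝ) =
          Pi.single r 1 - Pi.single v 1 := by module
      rw [heq]; exact this
    · refine ⟨1, Or.inl rfl, ?_⟩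
      have := (walk_mem p).2 ho
      have heq : (Pi.single r 1 : Fin d → ℝ) + (1 : ℝ) • (Pi.single v 1 : Fin d → ℝ) =
          Pi.single r 1 + Pi.single v 1 := by module
      rw [heq]; exact this
  choose ε hε1 hε2 using hε
  have hεne : ∀ v, ε v ≠ 0 := by
    intro v
    rcases hε1 v with h | h <;> rw [h] <;> norm_num
  let w : {v : Fin d // v ≠ r} → (Fin d → ℝ) :=
    fun v => (Pi.single r 1 : Fin d → ℝ) + ε v • (Pi.single (v : Fin d) 1 : Fin d → ℝ)
  have hwM : ∀ v, w v ∈ M := fun v => hε2 v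
  have hindep : LinearIndependent ℝ w := by
    rw [Fintype.linearIndependent_iff]
    intro g hg i
    have h0 := congrFun hg (i : Fin d)
    rw [Finset.sum_apply] at h0
    simp only [w, Pi.add_apply, Pi.smul_apply, Pi.single_apply, smul_eq_mul, Pi.zero_apply,
      if_neg i.2, Subtype.coe_inj] at h0
    rw [Finset.sum_eq_single i (fun b _ hb => by simp [if_neg (Ne.symm hb)])
      (fun hi => absurd (Finset.mem_univ i) hi)] at h0
    simp [mul_eq_zero, hεne i] at h0
    exact h0
  have hcard : Fintype.card {v : Fin d // v ≠ r} = d - 1 := by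
    simp [Fintype.card_subtype_compl]
  have hspan : Submodule.span ℝ (Set.range w) ≤ M := by
    rw [Submodule.span_le]
    rintro x ⟨v, rfl⟩
    exact hwM v
  calc d - 1 = Module.finrank ℝ (Submodule.span ℝ (Set.range w)) := by
        rw [finrank_span_eq_card hindep, hcard]
    _ ≤ Module.finrank ℝ M := Submodule.finrank_mono hspan


/-- Let `G` be a connected finite (simple, loopless) graph on a
vertex set of size `d`.  Then the dimension of the edge polytope `P_G` (the
dimension of its affine hull, i.e. the rank of the vector span of the points
`ρ(e)`) equals `d − 2` if `G` is bipartite (2-colorable, i.e. has no odd cycle),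
and `d − 1` otherwise. -/
theorem stmt12 (d : ℕ) (G : SimpleGraph (Fin d)) (hG : G.Connected) :
    (G.Colorable 2 →
      Module.finrank ℝ
        (vectorSpan ℝ {x : Fin d → ℝ | ∃ i j, G.Adj i j ∧ x = rho s(i, j)}) = d - 2) ∧
    (¬ G.Colorable 2 →
      Module.finrank ℝ
        (vectorSpan ℝ {x : Fin d → ℝ | ∃ i j, G.Adj i j ∧ x = rho s(i, j)}) = d - 1) := by
  set S := {x : Fin d → ℝ | ∃ i j, G.Adj i j ∧ x = rho s(i, j)} with hSdef
  have hd : 0 < d := by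
    have : Nonempty (Fin d) := hG.nonempty
    exact Fin.pos_iff_nonempty.2 this
  have hS2 : ∀ x ∈ S, sumF d x = 2 := by
    rintro x ⟨i, j, hij, rfl⟩
    exact sumF_rho i j
  constructor
  · intro hC
    by_cases hd2 : 2 ≤ d
    · -- S nonempty: find an edge
      have hne : S.Nonempty := by
        obtain ⟨p⟩ := hG.preconnected ⟨0, by omega⟩ ⟨1, by omega⟩
        cases p with
        | cons h q => exact ⟨_, _, _, h, rfl⟩
      have hadd := span_eq_vectorSpan_add S hS2 hne
      have hub := finrank_span_le_of_colorable hd hC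
      have hlb := finrank_span_ge hG ⟨0, hd⟩
      rw [← hSdef] at hub hlb
      omega
    · -- d = 1 : S is empty
      have hd1 : d = 1 := by omega
      have hSe : S = ∅ := by
        ext x
        simp only [Set.mem_empty_iff_false, iff_false, hSdef]
        rintro ⟨i, j, hij, -⟩
        exact hij.ne (Fin.ext (by have h1 := i.isLt; have h2 := j.isLt; omega))
      rw [hSe, vectorSpan_empty, finrank_bot]
      omega
  · intro hn
    have hne : S.Nonempty := by
      by_contra hemp
      refine hn ⟨SimpleGraph.Coloring.mk (fun _ => 0) ?_⟩
      intro u v huv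
      exact absurd ⟨u, v, huv, rfl⟩ (fun h => hemp ⟨_, h⟩)
    have hadd := span_eq_vectorSpan_add S hS2 hne
    have htop := span_top_of_not_colorable hG hn
    rw [← hSdef] at htop
    rw [htop, finrank_top, Module.finrank_pi, Fintype.card_fin] at hadd
    omega
end

section
/- Let G be a finite graph with at most one loop such that each connected component of G̃ has at most one cycle and every cycle of G̃ has odd length. Then P_G ∩ ℤ^d equals the set of vertices of P_G, i.e., P_G ∩ ℤ^d = {ρ(e) : e ∈ E(G̃)}. -/
/-- A cycle of length `Q` in the graph with edge set `E`: an injective cyclic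
sequence of vertices consecutive ones being adjacent.  (A loop is a cycle of
length 1; since the graph has no multiple edges, `Q = 2` is excluded.) -/
def IsCycle {d : ℕ} (E : Set (Sym2 (Fin d))) (Q : ℕ) (hQ : 0 < Q)
    (u : Fin Q → Fin d) : Prop :=
  Function.Injective u ∧ Q ≠ 2 ∧
    ∀ k : Fin Q, s(u k, u ⟨(k.val + 1) % Q, Nat.mod_lt _ hQ⟩) ∈ E

lemma rho_mk_s19 {d : ℕ} (a b c : Fin d) :
    rho s(a,b) c = (if c = a then (1:ℝ) else 0) + (if c = b then 1 else 0) := rfl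

lemma rho_nonneg {d : ℕ} (e : Sym2 (Fin d)) (c : Fin d) : 0 ≤ rho e c := by
  obtain ⟨⟨a,b⟩, rfl⟩ := e.exists_rep
  rw [show Quot.mk _ (a,b) = s(a,b) from rfl, rho_mk_s19]
  split_ifs <;> norm_num

lemma rho_sum {d : ℕ} (e : Sym2 (Fin d)) : ∑ c, rho e c = 2 := by
  obtain ⟨⟨a,b⟩, rfl⟩ := e.exists_rep
  rw [show Quot.mk _ (a,b) = s(a,b) from rfl]
  simp [rho_mk_s19, Finset.sum_add_distrib, Finset.sum_ite_eq']
  norm_num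

lemma rho_self_ne {d : ℕ} (a b : Fin d) : rho s(a,b) a ≠ 0 ∧ rho s(a,b) b ≠ 0 := by
  constructor <;> rw [rho_mk_s19] <;> split_ifs <;> simp_all

lemma nat_sum_two {d : ℕ} (n : Fin d → ℕ) (h : ∑ c, n c = 2) :
    ∃ i j, ∀ c, n c = (if c = i then 1 else 0) + (if c = j then 1 else 0) := by
  have hi : ∃ i, n i ≠ 0 := by
    by_contra hc
    push_neg at hc
    simp [hc] at h
  obtain ⟨i, hi⟩ := hi
  have hsplit : n i + ∑ c ∈ Finset.univ.erase i, n c = 2 := by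
    rw [Finset.add_sum_erase _ _ (Finset.mem_univ i)]; exact h
  rcases Nat.lt_or_ge (n i) 2 with h1 | h2
  · have hni : n i = 1 := by omega
    have hrest : ∑ c ∈ Finset.univ.erase i, n c = 1 := by omega
    have hj : ∃ j ∈ Finset.univ.erase i, n j ≠ 0 := by
      by_contra hc
      push_neg at hc
      rw [Finset.sum_eq_zero hc] at hrest; omega
    obtain ⟨j, hjm, hj0⟩ := hj
    have hji : j ≠ i := (Finset.mem_erase.mp hjm).1
    have hsplit2 : n j + ∑ c ∈ (Finset.univ.erase i).erase j, n c = 1 := by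
      rw [Finset.add_sum_erase _ _ hjm]; exact hrest
    have hnj : n j = 1 := by omega
    have hrest2 : ∀ c ∈ (Finset.univ.erase i).erase j, n c = 0 := by
      rw [← Finset.sum_eq_zero_iff]; omega
    refine ⟨i, j, fun c => ?_⟩
    by_cases hci : c = i
    · subst hci; simp [hni, Ne.symm hji]
    · by_cases hcj : c = j
      · subst hcj; simp [hnj, hci]
      · have : c ∈ (Finset.univ.erase i).erase j := by
          simp [Finset.mem_erase, hci, hcj]
        simp [hrest2 c this, hci, hcj]
  · have hni : n i = 2 := by
      have : n i ≤ 2 := by omega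
      omega
    have hrest : ∀ c ∈ Finset.univ.erase i, n c = 0 := by
      rw [← Finset.sum_eq_zero_iff]; omega
    refine ⟨i, i, fun c => ?_⟩
    by_cases hci : c = i
    · subst hci; simp [hni]
    · have : c ∈ Finset.univ.erase i := by simp [Finset.mem_erase, hci]
      simp [hrest c this, hci]

/-- Let `G` be a finite graph (loops allowed) with at most one
loop, such that each connected component of `G̃ = G` has at most one cycle
(any two cycles joined by a walk coincide as edge sets) and every cycle of `G`
has odd length.  Then `P_G ∩ ℤ^d` equals the set of vertices of `P_G`, i.e.
the only lattice points of `P_G` are the points `ρ(e)`, `e ∈ E(G)`. -/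
theorem stmt19 (d : ℕ) (E : Set (Sym2 (Fin d)))
    (hloop : ∀ e ∈ E, ∀ f ∈ E, e.IsDiag → f.IsDiag → e = f)
    (hodd : ∀ (Q : ℕ) (hQ : 0 < Q) (u : Fin Q → Fin d),
      IsCycle E Q hQ u → Odd Q)
    (honecycle : ∀ (Q Q' : ℕ) (hQ : 0 < Q) (hQ' : 0 < Q')
      (u : Fin Q → Fin d) (u' : Fin Q' → Fin d),
      IsCycle E Q hQ u → IsCycle E Q' hQ' u' →
      Relation.ReflTransGen (fun a b => s(a, b) ∈ E) (u ⟨0, hQ⟩) (u' ⟨0, hQ'⟩) →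
      Set.range (fun k : Fin Q => s(u k, u ⟨(k.val + 1) % Q, Nat.mod_lt _ hQ⟩)) =
        Set.range (fun k : Fin Q' => s(u' k, u' ⟨(k.val + 1) % Q', Nat.mod_lt _ hQ'⟩))) :
    convexHull ℝ (rho '' E) ∩ {x : Fin d → ℝ | ∀ t, ∃ z : ℤ, x t = (z : ℝ)} =
      rho '' E := by
  apply Set.eq_of_subset_of_subset
  · rintro x ⟨hxh, hxint⟩
    rw [convexHull_eq] at hxh
    obtain ⟨ι, t, w, z, hw0, hw1, hzE, hxc⟩ := hxh
    rw [Finset.centerMass_eq_of_sum_1 _ _ hw1] at hxc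
    have hcoord : ∀ c, x c = ∑ k ∈ t, w k * z k c := by
      intro c
      rw [← hxc]
      simp [Finset.sum_apply]
    have hz : ∀ k ∈ t, ∃ e ∈ E, z k = rho e := by
      intro k hk
      obtain ⟨e, he, hze⟩ := hzE k hk
      exact ⟨e, he, hze.symm⟩
    -- nonnegativity of coordinates
    have hterm : ∀ c, ∀ k ∈ t, 0 ≤ w k * z k c := by
      intro c k hk
      obtain ⟨e, _, hze⟩ := hz k hk
      exact mul_nonneg (hw0 k hk) (hze ▸ rho_nonneg e c)
    have hxnn : ∀ c, 0 ≤ x c := fun c =>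
      (hcoord c) ▸ Finset.sum_nonneg (hterm c)
    -- natural number coordinates
    have hnat : ∀ c, ∃ m : ℕ, x c = m := by
      intro c
      obtain ⟨zc, hzc⟩ := hxint c
      have : 0 ≤ zc := by exact_mod_cast hzc ▸ hxnn c
      exact ⟨zc.toNat, by rw [hzc]; exact_mod_cast (Int.toNat_of_nonneg this).symm⟩
    choose n hn using hnat
    -- sum of coordinates is 2
    have hsum2 : ∑ c, x c = 2 := by
      have : ∑ c, x c = ∑ k ∈ t, w k * 2 := by
        simp only [hcoord]
        rw [Finset.sum_comm]
        refine Finset.sum_congr rfl fun k hk => ?_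
        obtain ⟨e, _, hze⟩ := hz k hk
        rw [← Finset.mul_sum, hze, rho_sum e]
      rw [this, ← Finset.sum_mul, hw1, one_mul]
    have hnsum : ∑ c, n c = 2 := by
      have : ((∑ c, n c : ℕ) : ℝ) = 2 := by push_cast [← hn]; exact hsum2
      exact_mod_cast this
    obtain ⟨i, j, hnij⟩ := nat_sum_two n hnsum
    have hx : ∀ c, x c = (if c = i then (1:ℝ) else 0) + (if c = j then 1 else 0) := by
      intro c
      rw [hn c, hnij c]
      push_cast
      split_ifs <;> norm_num
    -- support vertices
    have hzero : ∀ c, x c = 0 → ∀ k ∈ t, w k ≠ 0 → z k c = 0 := by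
      intro c hc k hk hwk
      have hs : ∑ k ∈ t, w k * z k c = 0 := (hcoord c ▸ hc)
      have := (Finset.sum_eq_zero_iff_of_nonneg (hterm c)).mp hs k hk
      rcases mul_eq_zero.mp this with h | h
      · exact absurd h hwk
      · exact h
    have key : ∀ k ∈ t, w k ≠ 0 → ∀ a b : Fin d, z k = rho s(a,b) →
        (a = i ∨ a = j) ∧ (b = i ∨ b = j) := by
      intro k hk hwk a b hzk
      constructor
      · by_contra hc
        push_neg at hc
        have hxa : x a = 0 := by rw [hx a]; simp [hc.1, hc.2]
        exact (rho_self_ne a b).1 (hzk ▸ hzero a hxa k hk hwk)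
      · by_contra hc
        push_neg at hc
        have hxb : x b = 0 := by rw [hx b]; simp [hc.1, hc.2]
        exact (rho_self_ne a b).2 (hzk ▸ hzero b hxb k hk hwk)
    -- there is a positive weight
    have hk0 : ∃ k ∈ t, w k ≠ 0 := by
      by_contra hc
      push_neg at hc
      rw [Finset.sum_eq_zero hc] at hw1
      norm_num at hw1
    -- each supported edge is s(i,j), s(i,i) or s(j,j)
    have claim : ∀ k ∈ t, w k ≠ 0 → ∃ e ∈ E, z k = rho e ∧
        (e = s(i,j) ∨ e = s(i,i) ∨ e = s(j,j)) := by
      intro k hk hwk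
      obtain ⟨e, he, hze⟩ := hz k hk
      obtain ⟨⟨a,b⟩, rfl⟩ := e.exists_rep
      have hab := key k hk hwk a b hze
      refine ⟨s(a,b), he, hze, ?_⟩
      rcases hab.1 with rfl | rfl <;> rcases hab.2 with rfl | rfl
      · right; left; rfl
      · left; rfl
      · left; exact Sym2.eq_swap
      · right; right; rfl
    by_cases hnd : ∃ k ∈ t, w k ≠ 0 ∧ s(i,j) ∈ E ∧ z k = rho s(i,j)
    · obtain ⟨k, hk, hwk, hije, _⟩ := hnd
      refine ⟨s(i,j), hije, ?_⟩
      funext c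
      rw [rho_mk_s19, hx c]
    · -- all supported edges are diagonal, hence equal by hloop
      push_neg at hnd
      obtain ⟨k0, hk0t, hw0'⟩ := hk0
      obtain ⟨g, hg, hzg, hgc⟩ := claim k0 hk0t hw0'
      have hgdiag : g.IsDiag := by
        rcases hgc with rfl | rfl | rfl
        · exact absurd hzg (hnd k0 hk0t hw0' hg)
        · exact Sym2.mk_isDiag_iff.mpr rfl
        · exact Sym2.mk_isDiag_iff.mpr rfl
      have hall : ∀ k ∈ t, w k ≠ 0 → z k = rho g := by
        intro k hk hwk
        obtain ⟨e, he, hze, hec⟩ := claim k hk hwk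
        have hediag : e.IsDiag := by
          rcases hec with rfl | rfl | rfl
          · exact absurd hze (hnd k hk hwk he)
          · exact Sym2.mk_isDiag_iff.mpr rfl
          · exact Sym2.mk_isDiag_iff.mpr rfl
        rw [hze, hloop e he g hg hediag hgdiag]
      -- hence x = rho g
      have hxg : x = rho g := by
        funext c
        rw [hcoord c]
        have : ∀ k ∈ t, w k * z k c = w k * rho g c := by
          intro k hk
          by_cases hwk : w k = 0
          · simp [hwk]
          · rw [hall k hk hwk]
        rw [Finset.sum_congr rfl this, ← Finset.sum_mul, hw1, one_mul]
      -- contradiction at coordinate i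
      exfalso
      have hij : i ≠ j := by
        rintro rfl
        rcases hgc with rfl | rfl | rfl <;> exact hnd k0 hk0t hw0' hg hzg
      have hxi : x i = 1 := by rw [hx i]; simp [hij]
      obtain ⟨⟨a,b⟩, rfl⟩ := g.exists_rep
      have hab : a = b := Sym2.mk_isDiag_iff.mp hgdiag
      subst hab
      have h1 : rho s(a,a) i = 1 := by
        rw [show (s(a,a) : Sym2 (Fin d)) = Quot.mk _ (a,a) from rfl, ← hxg]
        exact hxi
      rw [rho_mk_s19] at h1
      split_ifs at h1 <;> norm_num at h1
  · rintro x ⟨e, he, rfl⟩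
    refine ⟨subset_convexHull ℝ _ (Set.mem_image_of_mem _ he), fun c => ?_⟩
    obtain ⟨⟨a,b⟩, rfl⟩ := e.exists_rep
    refine ⟨(if c = a then 1 else 0) + (if c = b then 1 else 0), ?_⟩
    rw [show rho (Quot.mk _ (a,b)) c = _ from rho_mk_s19 a b c]
    push_cast
    split_ifs <;> norm_num
end
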